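/- Fix an integer N > 1. Every mKdV tuple of subsets (S₁,…,S_N) arises from the construction S_{S,σ}: setting S = S_N with leading term A = {a₁ < … < a_N}, there exists a permutation σ of {1,…,N} such that S_i = {a_{σ(1)}+i−N, …, a_{σ(i)}+i−N} ∪ (S+i) for every i = 1,…,N. -/

import Mathlib

/-!
Going once around the cycle gives `S + i ⊆ Sᵢ ⊆ S + (i - N)`, and `S + (i - N)` is the disjoint
union of `A + (i - N)` and `S + i`; so `Sᵢ` is `S + i` together with the translates `a_j + i - N`
for `j` in some set `Cᵢ` of labels. The relative index `|X \ Y| - |Y \ X|` of commensurable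
sets is additive, and a virtual cardinal is the index relative to `ℤ≥0`, which drops by `k` under
the shift by `k`; hence `|Cᵢ| = |Sᵢ \ (S + i)| = i`. The cyclic inclusions
`Sᵢ + 1 ⊆ Sᵢ₊₁` make `C₁ ⊆ ⋯ ⊆ C_N` a maximal chain of subsets of `{1, …, N}`, and such a chain
is `Cᵢ = σ {1, …, i}` for a permutation `σ`.
-/

/-- A subset `S ⊆ ℤ` is of virtual cardinal zero if both `S \ ℤ≥0` and `ℤ≥0 \ S`
are finite and have the same cardinality. -/
def VirtualCardZero (S : Set ℤ) : Prop :=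
  (S \ {n : ℤ | 0 ≤ n}).Finite ∧ ({n : ℤ | 0 ≤ n} \ S).Finite ∧
    (S \ {n : ℤ | 0 ≤ n}).ncard = ({n : ℤ | 0 ≤ n} \ S).ncard

/-- The shift `S + k = {s + k : s ∈ S}` of a set of integers. -/
def shiftSet (S : Set ℤ) (k : ℤ) : Set ℤ := (fun s => s + k) '' S

/-- A KdV subset (for a fixed `N`): a subset `S ⊆ ℤ` of virtual cardinal zero
such that `S + N ⊆ S`. -/
def IsKdV (N : ℕ) (S : Set ℤ) : Prop :=
  VirtualCardZero S ∧ shiftSet S N ⊆ S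

/-- `A` is the leading term of the KdV subset `S`: `A` is an `N`-element set with
`S = A ∪ (S+N)` and `A ∩ (S+N) = ∅`. -/
def IsLeadingTerm (N : ℕ) (S : Set ℤ) (A : Finset ℤ) : Prop :=
  A.card = N ∧ (↑A : Set ℤ) ∪ shiftSet S N = S ∧ (↑A : Set ℤ) ∩ shiftSet S N = ∅

/-- The mutation `S[a] = {a+1−N} ∪ (S+1)` of a KdV subset `S` at an element `a`
of its leading term. -/
def mutate (N : ℕ) (S : Set ℤ) (a : ℤ) : Set ℤ :=
  {a + 1 - (N : ℤ)} ∪ shiftSet S 1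

/-- An mKdV tuple of subsets: an `N`-tuple `(S₁,…,S_N)` of KdV subsets with
`S_i + 1 ⊆ S_{i+1}` for `i = 1,…,N−1` and `S_N + 1 ⊆ S₁` (i.e. cyclically). -/
def IsMKdVTuple (N : ℕ) [NeZero N] (T : Fin N → Set ℤ) : Prop :=
  (∀ i, IsKdV N (T i)) ∧ ∀ i : Fin N, shiftSet (T i) 1 ⊆ T (i + 1)

/-- The tuple `S_{S,σ}`: given a KdV subset `S` whose leading term is enumerated
increasingly by `a : Fin N → ℤ` and a permutation `σ`, its `i`-th entry (`i` being
0-based, corresponding to the 1-based index `i+1`) is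
`S_{i+1} = {a_{σ(1)}+(i+1)−N, …, a_{σ(i+1)}+(i+1)−N} ∪ (S+(i+1))`. -/
def mkTuple (N : ℕ) (S : Set ℤ) (a : Fin N → ℤ) (σ : Equiv.Perm (Fin N))
    (i : Fin N) : Set ℤ :=
  ((fun j : Fin N => a (σ j) + ((i : ℕ) : ℤ) + 1 - (N : ℤ)) ''
      {j : Fin N | (j : ℕ) ≤ (i : ℕ)}) ∪ shiftSet S (((i : ℕ) : ℤ) + 1)

open Function Set

section RelIndex

variable {α : Type*}

-- Only meaningful when `symmDiff X Y` is finite: `ncard` is `0` on infinite sets.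
noncomputable def relIndex (X Y : Set α) : ℤ := (X \ Y).ncard - (Y \ X).ncard

theorem relIndex_eq_ncard_inter_sub {X Y F : Set α} (hF : F.Finite) (h : symmDiff X Y ⊆ F) :
    relIndex X Y = (X ∩ F).ncard - (Y ∩ F).ncard := by
  have hdiff {U W : Set α} (hUW : U \ W ⊆ F) : U \ W = (U ∩ F) \ (W ∩ F) := by
    ext x
    exact ⟨fun hx => ⟨⟨hx.1, hUW hx⟩, fun hw => hx.2 hw.1⟩,
      fun hx => ⟨hx.1.1, fun hw => hx.2 ⟨hw, hx.1.2⟩⟩⟩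
  rw [Set.symmDiff_def, union_subset_iff] at h
  have hX := ncard_inter_add_ncard_sdiff_eq_ncard (X ∩ F) (Y ∩ F) (hF.subset inter_subset_right)
  have hY := ncard_inter_add_ncard_sdiff_eq_ncard (Y ∩ F) (X ∩ F) (hF.subset inter_subset_right)
  rw [inter_comm (Y ∩ F)] at hY
  rw [relIndex, hdiff h.1, hdiff h.2]
  omega

theorem relIndex_add_relIndex {X Y Z : Set α} (hXY : (symmDiff X Y).Finite)
    (hYZ : (symmDiff Y Z).Finite) : relIndex X Y + relIndex Y Z = relIndex X Z := by
  have hF := hXY.union hYZ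
  rw [relIndex_eq_ncard_inter_sub hF subset_union_left,
    relIndex_eq_ncard_inter_sub hF subset_union_right,
    relIndex_eq_ncard_inter_sub hF (symmDiff_triangle X Y Z)]
  ring

theorem relIndex_of_subset {X Y : Set α} (h : Y ⊆ X) : relIndex X Y = (X \ Y).ncard := by
  simp [relIndex, sdiff_eq_empty.mpr h]

theorem relIndex_image {β : Type*} {f : α → β} (hf : Injective f) (X Y : Set α) :
    relIndex (f '' X) (f '' Y) = relIndex X Y := by
  simp only [relIndex, ← image_sdiff hf, ncard_image_of_injective _ hf]

end RelIndex

theorem virtualCardZero_iff (S : Set ℤ) :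
    VirtualCardZero S ↔ (symmDiff S (Ici 0)).Finite ∧ relIndex S (Ici 0) = 0 := by
  rw [Set.symmDiff_def, finite_union, relIndex, sub_eq_zero, Nat.cast_inj]
  exact and_assoc.symm

theorem mem_shiftSet {S : Set ℤ} {k x : ℤ} : x ∈ shiftSet S k ↔ x - k ∈ S :=
  ⟨by rintro ⟨s, hs, rfl⟩; simpa using hs, fun h => ⟨x - k, h, sub_add_cancel x k⟩⟩

theorem shiftSet_zero (S : Set ℤ) : shiftSet S 0 = S := by
  simp [shiftSet]

theorem shiftSet_shiftSet (S : Set ℤ) (j k : ℤ) :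
    shiftSet (shiftSet S j) k = shiftSet S (j + k) := by
  ext x; simp only [mem_shiftSet, sub_sub, add_comm k]

theorem shiftSet_subset_iff {X Y : Set ℤ} {k : ℤ} :
    shiftSet X k ⊆ Y ↔ X ⊆ shiftSet Y (-k) := by
  simp only [subset_def, mem_shiftSet, sub_neg_eq_add]
  exact ⟨fun h x hx => h (x + k) (by simpa using hx), fun h x hx => by simpa using h _ hx⟩

theorem VirtualCardZero.ncard_diff_shiftSet {V S : Set ℤ} (hV : VirtualCardZero V)
    (hS : VirtualCardZero S) {k : ℕ} (h : shiftSet S k ⊆ V) :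
    (V \ shiftSet S k).ncard = k := by
  rw [virtualCardZero_iff] at hV hS
  set P : Set ℤ := Ici 0
  have hPk : shiftSet P k = Ici (k : ℤ) := by
    rw [shiftSet, image_add_const_Ici, zero_add]
  have hkP : Ici (k : ℤ) ⊆ P := Ici_subset_Ici.mpr (Nat.cast_nonneg k)
  have hPPk : symmDiff P (shiftSet P k) = Ico 0 (k : ℤ) := by
    rw [hPk, Set.symmDiff_def, Ici_sdiff_Ici, sdiff_eq_empty.mpr hkP, union_empty]
  have hPkSk : symmDiff (shiftSet P k) (shiftSet S k) = shiftSet (symmDiff P S) k :=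
    (image_symmDiff (add_left_injective _) _ _).symm
  have hVP : (symmDiff V P).Finite := hV.1
  have hPS : (symmDiff P S).Finite := symmDiff_comm S P ▸ hS.1
  have hPPk_fin : (symmDiff P (shiftSet P k)).Finite := hPPk ▸ finite_Ico 0 _
  have hVPk : (symmDiff V (shiftSet P k)).Finite :=
    (hVP.union hPPk_fin).subset (symmDiff_triangle V P _)
  rw [← Nat.cast_inj (R := ℤ)]
  calc ((V \ shiftSet S k).ncard : ℤ)
      = relIndex V (shiftSet S k) := (relIndex_of_subset h).symm
    _ = relIndex V P + relIndex P (shiftSet P k) + relIndex (shiftSet P k) (shiftSet S k) := by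
      rw [relIndex_add_relIndex hVP hPPk_fin,
        relIndex_add_relIndex hVPk (hPkSk ▸ hPS.image _)]
    _ = k := by
      have hgap : relIndex P (shiftSet P k) = k := by
        rw [relIndex_of_subset (hPk.trans_subset hkP), hPk, Ici_sdiff_Ici, ← Finset.coe_Ico,
          ncard_coe_finset, Int.card_Ico, sub_zero, Int.toNat_natCast]
      have hSP : relIndex P S = 0 := by
        rw [relIndex, sub_eq_zero, eq_comm, ← sub_eq_zero]; exact hS.2
      have hshift : relIndex (shiftSet P k) (shiftSet S k) = relIndex P S :=
        relIndex_image (add_left_injective _) P S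
      rw [hV.2, hgap, hshift, hSP, zero_add, add_zero]

section MKdVTuple

open Fin.NatCast

variable {N : ℕ} [NeZero N] {T : Fin N → Set ℤ}

theorem IsMKdVTuple.shiftSet_subset (hT : IsMKdVTuple N T) (m n : ℕ) :
    shiftSet (T m) n ⊆ T (m + n : ℕ) := by
  induction n with
  | zero => simp [shiftSet_zero]
  | succ n ih =>
    calc shiftSet (T m) ↑(n + 1) = shiftSet (shiftSet (T m) n) 1 := by
          rw [shiftSet_shiftSet, Nat.cast_succ]
      _ ⊆ shiftSet (T (m + n : ℕ)) 1 := image_mono ih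
      _ ⊆ T (m + (n + 1) : ℕ) := by
          rw [← add_assoc, Nat.cast_succ]; exact hT.2 _

theorem IsMKdVTuple.shiftSet_subset_of_le (hT : IsMKdVTuple N T) {i j : Fin N} (h : i ≤ j) :
    shiftSet (T i) ((j : ℤ) - i) ⊆ T j := by
  have := hT.shiftSet_subset i (j - i)
  rwa [Nat.add_sub_cancel' h, Fin.cast_val_eq_self, Fin.cast_val_eq_self, Nat.cast_sub h] at this

theorem IsMKdVTuple.shiftSet_add_sub_subset (hT : IsMKdVTuple N T) (i j : Fin N) :
    shiftSet (T j) ((i : ℤ) + N - j) ⊆ T i := by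
  have := hT.shiftSet_subset j (i + N - j)
  rwa [Nat.add_sub_cancel' (by omega), Fin.cast_val_eq_self, Nat.cast_add, Fin.natCast_self,
    add_zero, Fin.cast_val_eq_self, Nat.cast_sub (by omega), Nat.cast_add] at this

end MKdVTuple

theorem IsLeadingTerm.diff_shiftSet_eq_image {N : ℕ} {S V : Set ℤ} {A : Finset ℤ}
    (hA : IsLeadingTerm N S A) {ι : Type*} {a : ι → ℤ} (haA : (↑A : Set ℤ) = range a) {l : ℤ}
    (hV : V ⊆ shiftSet S (l - N)) :
    V \ shiftSet S l = (fun j => a j + (l - N)) '' {j | a j + (l - N) ∈ V} := by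
  have hSN : ∀ x, x - (l - N) ∈ shiftSet S N ↔ x ∈ shiftSet S l := fun x => by
    rw [mem_shiftSet, mem_shiftSet, sub_sub, sub_add_cancel]
  ext x
  constructor
  · rintro ⟨hxV, hxS⟩
    have hx : x - (l - N) ∈ (↑A : Set ℤ) ∪ shiftSet S N := hA.2.1.symm ▸ mem_shiftSet.mp (hV hxV)
    obtain ⟨j, hj⟩ : x - (l - N) ∈ range a := haA ▸ hx.resolve_right (mt (hSN x).mp hxS)
    exact ⟨j, by simpa [hj] using hxV, by simp [hj]⟩
  · rintro ⟨j, hjV, rfl⟩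
    refine ⟨hjV, fun hjS => ?_⟩
    have hj : a j ∈ (↑A : Set ℤ) ∩ shiftSet S N :=
      ⟨haA ▸ mem_range_self j, by simpa using (hSN _).mpr hjS⟩
    rwa [hA.2.2] at hj

theorem exists_equiv_image_Iic_of_monotone {α : Type*} [Finite α] {n : ℕ} (hα : Nat.card α = n)
    {C : Fin n → Set α} (hC : Monotone C) (hcard : ∀ i, (C i).ncard = i + 1) :
    ∃ σ : Fin n ≃ α, ∀ i, C i = σ '' Iic i := by
  have hnew : ∀ i, ∃ x ∈ C i, ∀ j < i, x ∉ C j := by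
    intro i
    rcases Nat.eq_zero_or_eq_succ_pred i.val with hi | hi
    · obtain ⟨x, hx⟩ := nonempty_of_ncard_ne_zero (s := C i) (by rw [hcard]; omega)
      exact ⟨x, hx, fun j hj => absurd hj (by simp [Fin.lt_def, hi])⟩
    · let p : Fin n := ⟨i.val - 1, by omega⟩
      obtain ⟨x, hx, hxp⟩ := exists_mem_notMem_of_ncard_lt_ncard (s := C p) (t := C i)
        (by rw [hcard, hcard]; simp only [p]; omega)
      exact ⟨x, hx, fun j hj hxj => hxp (hC (Fin.le_def.mpr (by simp only [p]; omega)) hxj)⟩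
  choose g hgC hgnew using hnew
  have hg : Injective g := by
    intro i j hij
    by_contra hne
    rcases lt_or_gt_of_ne hne with h | h
    · exact hgnew j i h (hij ▸ hgC i)
    · exact hgnew i j h (hij.symm ▸ hgC j)
  refine ⟨Equiv.ofBijective g (hg.bijective_of_nat_card_le (by simp [hα])), fun i => ?_⟩
  refine (eq_of_subset_of_ncard_le ?_ ?_).symm
  · rintro _ ⟨j, hj, rfl⟩
    exact hC hj (hgC j)
  · rw [hcard, Equiv.coe_ofBijective, ncard_image_of_injective _ hg, ← Finset.coe_Iic,
      ncard_coe_finset, Fin.card_Iic]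

/-- Fix `N > 1`.  Every mKdV tuple of subsets `(S₁,…,S_N)` arises
from the construction `S_{S,σ}`: with `S = S_N` whose leading term
`A = {a₁ < … < a_N}` is enumerated increasingly by `a`, there is a permutation `σ`
of `{1,…,N}` with `S_i = {a_{σ(1)}+i−N, …, a_{σ(i)}+i−N} ∪ (S+i)` for all `i`. -/
theorem mkdvTuple_eq_mkTuple (N : ℕ) [NeZero N] (hN : 1 < N)
    (T : Fin N → Set ℤ) (hT : IsMKdVTuple N T)
    (A : Finset ℤ) (hA : IsLeadingTerm N (T ⟨N - 1, by omega⟩) A)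
    (a : Fin N → ℤ) (ha : StrictMono a) (haA : (↑A : Set ℤ) = Set.range a) :
    ∃ σ : Equiv.Perm (Fin N), ∀ i : Fin N,
      T i = mkTuple N (T ⟨N - 1, by omega⟩) a σ i := by
  set S := T ⟨N - 1, by omega⟩
  have hT_sub (i : Fin N) : T i ⊆ shiftSet S ((i : ℤ) + 1 - N) := by
    have := hT.shiftSet_subset_of_le (i := i) (j := ⟨N - 1, by omega⟩)
      (Fin.le_def.mpr (Nat.le_pred_of_lt i.isLt))
    rw [shiftSet_subset_iff] at this
    convert this using 2
    push_cast [Nat.cast_sub (by omega : 1 ≤ N)]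
    ring
  have hS_sub (i : Fin N) : shiftSet S ((i : ℤ) + 1) ⊆ T i := by
    convert hT.shiftSet_add_sub_subset i ⟨N - 1, by omega⟩ using 2
    push_cast [Nat.cast_sub (by omega : 1 ≤ N)]
    ring
  let C : Fin N → Set (Fin N) := fun i => {j | a j + ((i : ℤ) + 1 - N) ∈ T i}
  have hdiff (i : Fin N) :
      T i \ shiftSet S ((i : ℤ) + 1) = (fun j => a j + ((i : ℤ) + 1 - N)) '' C i :=
    hA.diff_shiftSet_eq_image haA (hT_sub i)
  have hC_card (i : Fin N) : (C i).ncard = i + 1 := by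
    have hinj : Injective fun j => a j + ((i : ℤ) + 1 - N) :=
      (add_left_injective _).comp ha.injective
    rw [← ncard_image_of_injective _ hinj, ← hdiff]
    exact_mod_cast (hT.1 i).1.ncard_diff_shiftSet (hT.1 _).1 (k := i + 1)
      (by exact_mod_cast hS_sub i)
  have hC_mono : Monotone C := fun i i' h j hj => by
    have := hT.shiftSet_subset_of_le h ⟨_, hj, rfl⟩
    show a j + _ ∈ T i'
    convert this using 1
    ring
  obtain ⟨σ, hσ⟩ := exists_equiv_image_Iic_of_monotone (by simp) hC_mono hC_card
  refine ⟨σ, fun i => ?_⟩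
  rw [← sdiff_union_of_subset (hS_sub i), hdiff, hσ, image_image, mkTuple]
  congr 1
  exact image_congr fun j _ => by ring
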